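/- Let H be an r-m-uniform hb-graph on Fin n (every hb-edge has m-cardinality r ≥ 1) with hb-edges e_1, …, e_p, and let A_H be its k̄-adjacency hypermatrix. Then for every vertex j : Fin n, Σ_{t : t(0) = j} A_H(t) = deg_m(j), i.e. the sum of the entries of A_H over all tuples whose first coordinate is j equals the m-degree Σ_k e_k(j) of the vertex j. -/

import Mathlib

/-!
Counting the words `t : Fin r → α` with prescribed letter counts `c` gives the multinomial
identity `#{t realizing c} * ∏ i, (c i)! = r!`, proved by induction on `r` by splitting on the
first letter: the words realizing `c` that start with `a` are, after deleting that letter, the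
words of length `r - 1` realizing `c` with `c a` lowered by one. The same splitting shows that
`#{t realizing c | t 0 = a} * ∏ i, (c i)! = c a * (r - 1)!`, which is exactly the claim for
each hb-edge separately.
-/

open Finset Function Nat

section Realizers

variable {α : Type*} [DecidableEq α]

lemma card_filter_cons_eq {r : ℕ} (a : α) (t : Fin r → α) (i : α) :
    #{s | (Fin.cons a t : Fin (r + 1) → α) s = i} = #{s | t s = i} + if a = i then 1 else 0 := by
  simp only [card_filter, Fin.sum_univ_succ, Fin.cons_zero, Fin.cons_succ]
  ring

variable [Fintype α]

def realizers (r : ℕ) (c : α → ℕ) : Finset (Fin r → α) :=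
  {t | ∀ i, #{s | t s = i} = c i}

lemma sum_update_sub_one {c : α → ℕ} {a : α} (ha : c a ≠ 0) :
    ∑ i, update c a (c a - 1) i = ∑ i, c i - 1 := by
  rw [sum_update_of_mem (mem_univ a), ← add_sum_erase univ c (mem_univ a), sdiff_singleton_eq_erase]
  omega

lemma prod_factorial_eq_mul_prod_factorial_update {c : α → ℕ} {a : α} (ha : c a ≠ 0) :
    ∏ i, (c i)! = c a * ∏ i, (update c a (c a - 1) i)! := by
  simp only [apply_update (fun _ n => n !), prod_update_of_mem (mem_univ a),
    sdiff_singleton_eq_erase, ← mul_assoc, mul_factorial_pred ha]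
  exact (mul_prod_erase univ _ (mem_univ a)).symm

lemma cons_mem_realizers_iff {r : ℕ} {c : α → ℕ} {a : α} (ha : c a ≠ 0) (t : Fin r → α) :
    Fin.cons a t ∈ realizers (r + 1) c ↔ t ∈ realizers r (update c a (c a - 1)) := by
  simp only [realizers, mem_filter, mem_univ, true_and, card_filter_cons_eq]
  refine forall_congr' fun i => ?_
  rcases eq_or_ne i a with rfl | hia
  · simp only [update_self, if_true]
    omega
  · simp only [update_of_ne hia, if_neg hia.symm, add_zero]

lemma card_realizers_head_eq {r : ℕ} {c : α → ℕ} {a : α} (ha : c a ≠ 0) :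
    #{t ∈ realizers (r + 1) c | t 0 = a} = #(realizers r (update c a (c a - 1))) := by
  refine card_nbij' Fin.tail (Fin.cons (α := fun _ => α) a) (fun t ht => ?_) (fun t ht => ?_) (fun t ht => ?_)
    (fun t _ => Fin.tail_cons (α := fun _ => α) a t)
  · obtain ⟨ht, rfl⟩ := mem_filter.1 ht
    rwa [mem_coe, ← cons_mem_realizers_iff ha, Fin.cons_self_tail]
  · exact mem_filter.2 ⟨(cons_mem_realizers_iff ha t).2 ht, Fin.cons_zero _ _⟩
  · obtain ⟨-, rfl⟩ := mem_filter.1 ht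
    exact Fin.cons_self_tail t

lemma realizers_head_eq_empty {r : ℕ} {c : α → ℕ} {a : α} (ha : c a = 0) :
    {t ∈ realizers (r + 1) c | t 0 = a} = ∅ := by
  refine filter_eq_empty_iff.2 fun t ht h0 => ?_
  have hpos : #{s | t s = a} ≠ 0 := card_ne_zero_of_mem (mem_filter.2 ⟨mem_univ 0, h0⟩)
  exact hpos ((mem_filter.1 ht).2 a ▸ ha)

lemma card_realizers_head_mul_prod_factorial {r : ℕ}
    (ih : ∀ c : α → ℕ, ∑ i, c i = r → #(realizers r c) * ∏ i, (c i)! = r !)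
    {c : α → ℕ} (hc : ∑ i, c i = r + 1) (a : α) :
    #{t ∈ realizers (r + 1) c | t 0 = a} * ∏ i, (c i)! = c a * r ! := by
  rcases eq_or_ne (c a) 0 with ha | ha
  · simp [realizers_head_eq_empty ha, ha]
  · rw [card_realizers_head_eq ha, prod_factorial_eq_mul_prod_factorial_update ha, mul_left_comm,
      ih _ (by rw [sum_update_sub_one ha, hc, Nat.add_sub_cancel])]

theorem card_realizers_mul_prod_factorial {r : ℕ} {c : α → ℕ} (hc : ∑ i, c i = r) :
    #(realizers r c) * ∏ i, (c i)! = r ! := by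
  induction r generalizing c with
  | zero =>
    have hc0 : ∀ i, c i = 0 := fun i => sum_eq_zero_iff.1 hc i (mem_univ i)
    simp [realizers, hc0]
  | succ r ih =>
    rw [card_eq_sum_card_fiberwise (f := fun t => t 0) (t := univ) (fun _ _ => mem_coe.2 (mem_univ _)),
      sum_mul, sum_congr rfl fun a _ => card_realizers_head_mul_prod_factorial (fun _ => ih) hc a,
      ← sum_mul, hc, factorial_succ]

end Realizers

/-- For an `r`-m-uniform hb-graph on `Fin n` with hb-edges `e 1, …, e p`
(each of m-cardinality `r ≥ 1`) and its k̄-adjacency hypermatrix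
`A_H(t) = Σ_k (∏_i e_k(i)!)/(r−1)! · [t realizes e_k]`, the sum of the entries of
`A_H` over all tuples whose first coordinate is `j` equals the m-degree
`deg_m(j) = Σ_k e_k(j)` of the vertex `j`. -/
theorem stmt6 (n p r : ℕ) (hr : 1 ≤ r) (e : Fin p → Fin n → ℕ)
    (hunif : ∀ k, ∑ j, e k j = r) (j : Fin n) :
    ∑ t ∈ Finset.univ.filter (fun t : Fin r → Fin n => t ⟨0, hr⟩ = j),
        (∑ k, if ∀ i, (Finset.univ.filter (fun s => t s = i)).card = e k i
              then ((∏ i, (e k i).factorial : ℕ) : ℝ) / (r - 1).factorial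
              else 0)
      = ∑ k, (e k j : ℝ) := by
  obtain ⟨r, rfl⟩ : ∃ r', r = r' + 1 := ⟨r - 1, by omega⟩
  rw [sum_comm]
  refine sum_congr rfl fun k _ => ?_
  have hcount := card_realizers_head_mul_prod_factorial
    (fun _ => card_realizers_mul_prod_factorial) (hunif k) j
  rw [← sum_filter, sum_const, nsmul_eq_mul, filter_comm, show (⟨0, hr⟩ : Fin (r + 1)) = 0 from rfl,
    Nat.add_sub_cancel, mul_div_assoc', div_eq_iff (by positivity)]
  norm_cast
  convert hcount using 4
  -- the statement decides `∀ i : Fin n` by `decidableForallFin`, `realizers` by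
  -- `Fintype.decidableForallFintype`; the two instances are not definitionally equal
  unfold realizers
  congr
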